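/- arXiv:1307.7048 — 5 statements merged into one kernel-verified Lean document; each statement's English description precedes it below -/
import Mathlib

section
/- For any simple graph G and edge uv of G, the two sequences of local complementations agree: G * u * v * u = G * v * u * v. (Hence pivoting G ∧ uv is well-defined symmetrically in u and v.) -/
open scoped Classical

set_option maxHeartbeats 2000000

/-- Local complementation of `G` at `v`: adjacency is toggled on pairs of distinct
neighbours of `v` and unchanged elsewhere. -/
def localComp {V : Type*} (G : SimpleGraph V) (v : V) : SimpleGraph V where
  Adj x y := x ≠ y ∧ (if G.Adj v x ∧ G.Adj v y then ¬ G.Adj x y else G.Adj x y)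
  symm := by
    constructor
    rintro x y ⟨hxy, h⟩
    refine ⟨hxy.symm, ?_⟩
    by_cases hc : G.Adj v x ∧ G.Adj v y
    · rw [if_pos ⟨hc.2, hc.1⟩]
      rw [if_pos hc] at h
      exact fun h' => h h'.symm
    · rw [if_neg fun h' => hc ⟨h'.2, h'.1⟩]
      rw [if_neg hc] at h
      exact h.symm
  loopless := by constructor; rintro x ⟨h, -⟩; exact h rfl

private lemma pivot_generic {V : Type*} (G : SimpleGraph V) (u v x y : V) (huv : G.Adj u v)
    (hxy : x ≠ y) (hxu : x ≠ u) (hxv : x ≠ v) (hyu : y ≠ u) (hyv : y ≠ v) :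
    ((localComp (localComp (localComp G u) v) u).Adj x y ↔
      (localComp (localComp (localComp G v) u) v).Adj x y) := by
  have hvu : G.Adj v u := huv.symm
  have hne : u ≠ v := huv.ne
  by_cases a : G.Adj u x <;> by_cases b : G.Adj u y <;> by_cases c : G.Adj v x <;>
    by_cases d : G.Adj v y <;> by_cases e : G.Adj x y <;>
    simp [localComp, huv, hvu, hne, hne.symm, hxy, hxu, hxv, hyu, hyv,
      hxy.symm, hxu.symm, hxv.symm, hyu.symm, hyv.symm, a, b, c, d, e]

private lemma pivot_xu {V : Type*} (G : SimpleGraph V) (u v y : V) (huv : G.Adj u v)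
    (hyu : y ≠ u) (hyv : y ≠ v) :
    ((localComp (localComp (localComp G u) v) u).Adj u y ↔
      (localComp (localComp (localComp G v) u) v).Adj u y) := by
  have hvu : G.Adj v u := huv.symm
  have hne : u ≠ v := huv.ne
  by_cases b : G.Adj u y <;> by_cases d : G.Adj v y <;>
    simp [localComp, huv, hvu, hne, hne.symm, hyu, hyv, hyu.symm, hyv.symm, b, d]

private lemma pivot_xv {V : Type*} (G : SimpleGraph V) (u v y : V) (huv : G.Adj u v)
    (hyu : y ≠ u) (hyv : y ≠ v) :
    ((localComp (localComp (localComp G u) v) u).Adj v y ↔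
      (localComp (localComp (localComp G v) u) v).Adj v y) := by
  have hvu : G.Adj v u := huv.symm
  have hne : u ≠ v := huv.ne
  by_cases b : G.Adj u y <;> by_cases d : G.Adj v y <;>
    simp [localComp, huv, hvu, hne, hne.symm, hyu, hyv, hyu.symm, hyv.symm, b, d]

private lemma pivot_uv {V : Type*} (G : SimpleGraph V) (u v : V) (huv : G.Adj u v) :
    ((localComp (localComp (localComp G u) v) u).Adj u v ↔
      (localComp (localComp (localComp G v) u) v).Adj u v) := by
  have hvu : G.Adj v u := huv.symm
  have hne : u ≠ v := huv.ne
  simp [localComp, huv, hvu, hne, hne.symm]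

private lemma pivot_adj_symm {V : Type*} (G : SimpleGraph V) (w x y : V) :
    (localComp G w).Adj x y ↔ (localComp G w).Adj y x :=
  ⟨fun h => (localComp G w).symm.symm _ _ h, fun h => (localComp G w).symm.symm _ _ h⟩

/-- For an edge `uv`, the pivot `G ∧ uv = G*u*v*u = G*v*u*v` is symmetric in `u`,`v`. -/
theorem pivot_symm {V : Type*} (G : SimpleGraph V) (u v : V) (huv : G.Adj u v) :
    localComp (localComp (localComp G u) v) u
      = localComp (localComp (localComp G v) u) v := by
  have hvu : G.Adj v u := huv.symm
  have hne : u ≠ v := huv.ne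
  ext x y
  by_cases hxy : x = y
  · subst hxy; simp [localComp]
  by_cases hxu : x = u
  · rw [hxu]
    by_cases hyv : y = v
    · rw [hyv]; exact pivot_uv G u v huv
    · exact pivot_xu G u v y huv (fun h => hxy (hxu.trans h.symm)) hyv
  by_cases hxv : x = v
  · rw [hxv]
    by_cases hyu : y = u
    · rw [hyu]
      rw [pivot_adj_symm, pivot_adj_symm (localComp (localComp G v) u)]
      exact pivot_uv G u v huv
    · exact pivot_xv G u v y huv hyu (fun h => hxy (hxv.trans h.symm))
  by_cases hyu : y = u
  · rw [hyu]
    rw [pivot_adj_symm, pivot_adj_symm (localComp (localComp G v) u)]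
    exact pivot_xu G u v x huv hxu hxv
  by_cases hyv : y = v
  · rw [hyv]
    rw [pivot_adj_symm, pivot_adj_symm (localComp (localComp G v) u)]
    exact pivot_xv G u v x huv hxu hxv
  exact pivot_generic G u v x y huv hxy hxu hxv hyu hyv
end

section
/- Pivoting along an edge uv toggles exactly the pairs between the three sets A = N(u)\(N(v)∪{v}), B = N(v)\(N(u)∪{u}), C = N(u)∩N(v), and exchanges u and v: for vertices x,y not in {u,v}, xy is an edge of G*u*v*u iff (xy is an edge of G) XOR ((x,y) lies in (A×B) ∪ (B×C) ∪ (A×C), unordered). -/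
open scoped Classical

/-- Pivoting along an edge `uv` toggles exactly the pairs lying across the three sets
`A = N(u)\(N(v)∪{v})`, `B = N(v)\(N(u)∪{u})`, `C = N(u)∩N(v)` (for vertices other
than `u` and `v`). -/
theorem pivot_adj_iff {V : Type*} (G : SimpleGraph V) (u v : V) (huv : G.Adj u v)
    (x y : V) (hxu : x ≠ u) (hxv : x ≠ v) (hyu : y ≠ u) (hyv : y ≠ v) (hxy : x ≠ y) :
    (localComp (localComp (localComp G u) v) u).Adj x y ↔
      Xor' (G.Adj x y)
        (let A : V → Prop := fun w => G.Adj u w ∧ ¬ G.Adj v w ∧ w ≠ v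
         let B : V → Prop := fun w => G.Adj v w ∧ ¬ G.Adj u w ∧ w ≠ u
         let C : V → Prop := fun w => G.Adj u w ∧ G.Adj v w
         let cross : (V → Prop) → (V → Prop) → Prop := fun S T => (S x ∧ T y) ∨ (T x ∧ S y)
         cross A B ∨ cross B C ∨ cross A C) := by
  have hux : u ≠ x := hxu.symm
  have huy : u ≠ y := hyu.symm
  have hvx : v ≠ x := hxv.symm
  have hvy : v ≠ y := hyv.symm
  have hvu : v ≠ u := huv.ne'
  have hsux : G.Adj x u ↔ G.Adj u x := G.adj_comm x u
  have hsvy : G.Adj y v ↔ G.Adj v y := G.adj_comm y v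
  simp only [localComp, Xor']
  by_cases h1 : G.Adj u x <;> by_cases h2 : G.Adj u y <;>
    by_cases h3 : G.Adj v x <;> by_cases h4 : G.Adj v y <;> by_cases h5 : G.Adj x y <;>
    simp_all [huv, G.adj_symm huv, hxy, hxu, hxv, hyu, hyv, hux, huy, hvx, hvy, hvu] <;> tauto
end

section
/- Pivoting preserves bipartiteness: if G is a bipartite simple graph and uv is an edge of G, then the pivot G ∧ uv = G * u * v * u is also bipartite. -/
open scoped Classical

lemma localComp_adj {V : Type*} (G : SimpleGraph V) (v x y : V) :
    (localComp G v).Adj x y ↔ x ≠ y ∧ (if G.Adj v x ∧ G.Adj v y then ¬ G.Adj x y else G.Adj x y) := Iff.rfl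

/-- Pivoting along an edge preserves bipartiteness (2-colourability). -/
theorem pivot_preserves_bipartite {V : Type*} (G : SimpleGraph V) (u v : V)
    (huv : G.Adj u v) (hbip : G.Colorable 2) :
    (localComp (localComp (localComp G u) v) u).Colorable 2 := by
  classical
  obtain ⟨c⟩ := hbip
  have hne := c.valid huv
  have huvne : u ≠ v := huv.ne
  -- Fin 2: every color is c u or c v
  have htwo : ∀ x : V, c x = c u ∨ c x = c v := by
    intro x
    by_contra hx
    push_neg at hx
    obtain ⟨h1, h2⟩ := hx
    have := Fin.is_lt (c x); have := Fin.is_lt (c u); have := Fin.is_lt (c v)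
    omega
  -- no common neighbours
  have hcommon : ∀ x : V, G.Adj u x → G.Adj v x → False := by
    intro x h1 h2
    have e1 := c.valid h1
    have e2 := c.valid h2
    rcases htwo x with h | h <;> simp_all
  set G1 := localComp G u with hG1
  set G2 := localComp G1 v with hG2
  -- characterization of N_{G1}(v)
  have hN1 : ∀ x : V, G1.Adj v x ↔ v ≠ x ∧ (G.Adj u x ∨ G.Adj v x) := by
    intro x
    rw [hG1, localComp_adj]
    constructor
    · rintro ⟨hvx, h⟩
      refine ⟨hvx, ?_⟩
      by_cases hc : G.Adj u v ∧ G.Adj u x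
      · exact Or.inl hc.2
      · rw [if_neg hc] at h; exact Or.inr h
    · rintro ⟨hvx, h⟩
      refine ⟨hvx, ?_⟩
      by_cases hux : G.Adj u x
      · rw [if_pos ⟨huv, hux⟩]; exact fun hvx' => hcommon x hux hvx'
      · rw [if_neg (fun hc => hux hc.2)]
        exact h.resolve_left hux
  -- characterization of N_{G2}(u)
  have hN2 : ∀ x : V, G2.Adj u x ↔ x = v ∨ (u ≠ x ∧ v ≠ x ∧ G.Adj v x) := by
    intro x
    rw [hG2, localComp_adj]
    have hG1ux : G1.Adj u x ↔ G.Adj u x := by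
      rw [hG1, localComp_adj]
      constructor
      · rintro ⟨hux, h⟩
        by_cases hc : G.Adj u u ∧ G.Adj u x
        · exact hc.2
        · rwa [if_neg hc] at h
      · intro h
        exact ⟨h.ne, by rw [if_neg (fun hc => G.loopless.irrefl u hc.1)]; exact h⟩
    have hG1vu : G1.Adj v u := by
      rw [hN1 u]; exact ⟨huv.ne.symm, Or.inr huv.symm⟩
    constructor
    · rintro ⟨hux, h⟩
      by_cases hvx : v = x
      · exact Or.inl hvx.symm
      · by_cases hc : G1.Adj v u ∧ G1.Adj v x
        · rw [if_pos hc] at h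
          rw [hN1 x] at hc
          rcases hc.2.2 with h' | h'
          · exact absurd (hG1ux.mpr h') h
          · exact Or.inr ⟨hux, hvx, h'⟩
        · rw [if_neg hc] at h
          rw [hG1ux] at h
          -- h : G.Adj u x, and ¬(G1.Adj v u ∧ G1.Adj v x), but G1.Adj v x holds via h
          exact absurd ⟨hG1vu, (hN1 x).mpr ⟨hvx, Or.inl h⟩⟩ hc
    · rintro (hxv | ⟨hux, hvx, h⟩)
      · subst hxv
        refine ⟨huvne, ?_⟩
        rw [if_neg (fun hc => G1.loopless.irrefl x hc.2)]
        exact hG1ux.mpr huv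
      · refine ⟨hux, ?_⟩
        rw [if_pos ⟨hG1vu, (hN1 x).mpr ⟨hvx, Or.inr h⟩⟩, hG1ux]
        exact fun h' => hcommon x h' h
  -- colour facts
  have hcu : ∀ z, G.Adj u z → c z = c v := fun z hz =>
    (htwo z).resolve_left (fun h => c.valid hz h.symm)
  have hcv : ∀ z, G.Adj v z → c z = c u := fun z hz =>
    (htwo z).resolve_right (fun h => c.valid hz h.symm)
  -- the swapped coloring
  refine ⟨SimpleGraph.Coloring.mk
    (fun x => if x = u then c v else if x = v then c u else c x) ?_⟩
  intro x y h
  rw [localComp_adj] at h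
  obtain ⟨hxy, h⟩ := h
  show (if x = u then c v else if x = v then c u else c x) ≠
       (if y = u then c v else if y = v then c u else c y)
  by_cases hcond : G2.Adj u x ∧ G2.Adj u y
  · -- toggled at step 3: show this never happens (G2.Adj x y always holds here)
    rw [if_pos hcond] at h
    exfalso
    apply h
    rcases (hN2 x).mp hcond.1 with hxv | ⟨hux, hvx, hbx⟩ <;>
      rcases (hN2 y).mp hcond.2 with hyv | ⟨huy, hvy, hby⟩
    · exact absurd (hxv.trans hyv.symm) hxy
    · have hxv' := hxv.symm; subst hxv'
      refine ⟨hxy, ?_⟩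
      rw [if_neg (fun hc => G1.loopless.irrefl v hc.1)]
      exact (hN1 y).mpr ⟨hvy, Or.inr hby⟩
    · have hyv' := hyv.symm; subst hyv'
      refine ⟨hxy, ?_⟩
      rw [if_neg (fun hc => G1.loopless.irrefl v hc.2)]
      exact ((hN1 x).mpr ⟨hvx, Or.inr hbx⟩).symm
    · refine ⟨hxy, ?_⟩
      rw [if_pos ⟨(hN1 x).mpr ⟨hvx, Or.inr hbx⟩, (hN1 y).mpr ⟨hvy, Or.inr hby⟩⟩]
      intro hG1xy
      obtain ⟨-, hG1xy⟩ := hG1xy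
      rw [if_neg (fun hc => hcommon x hc.1 hbx)] at hG1xy
      have hcc := c.valid hG1xy
      rw [hcv x hbx, hcv y hby] at hcc
      exact hcc rfl
  · -- not toggled at step 3
    rw [if_neg hcond] at h
    by_cases hxu : x = u
    · subst hxu
      rcases (hN2 y).mp h with hyv | ⟨huy, hvy, hby⟩
      · have hyv' := hyv.symm; subst hyv'
        rw [if_pos rfl, if_neg (Ne.symm huvne), if_pos rfl]
        exact fun hh => hne hh.symm
      · rw [if_pos rfl, if_neg (Ne.symm huy), if_neg (Ne.symm hvy)]
        rw [hcv y hby]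
        exact Ne.symm hne
    · by_cases hyu : y = u
      · subst hyu
        rcases (hN2 x).mp h.symm with hxv | ⟨hux, hvx, hbx⟩
        · have hxv' := hxv.symm; subst hxv'
          rw [if_neg (Ne.symm huvne), if_pos rfl, if_pos rfl]
          exact hne
        · rw [if_neg (Ne.symm hux), if_neg (Ne.symm hvx), if_pos rfl]
          rw [hcv x hbx]
          exact hne
      · -- x ≠ u, y ≠ u
        rw [if_neg hxu, if_neg hyu]
        by_cases hxv : x = v
        · have hxv' := hxv.symm; subst hxv'
          rw [if_pos rfl]
          -- h : G2.Adj v y  which equals  G1.Adj v y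
          obtain ⟨-, h⟩ := h
          rw [if_neg (fun hc => G1.loopless.irrefl v hc.1)] at h
          rcases ((hN1 y).mp h).2 with hay | hby
          · rw [if_neg (fun hh => ((hN1 y).mp h).1 hh.symm), hcu y hay]
            exact hne
          · exact absurd ⟨(hN2 v).mpr (Or.inl rfl), (hN2 y).mpr
              (Or.inr ⟨Ne.symm hyu, ((hN1 y).mp h).1, hby⟩)⟩ hcond
        · rw [if_neg hxv]
          by_cases hyv : y = v
          · have hyv' := hyv.symm; subst hyv'
            rw [if_pos rfl]
            obtain ⟨-, h⟩ := h
            rw [if_neg (fun hc => G1.loopless.irrefl v hc.2)] at h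
            rcases ((hN1 x).mp h.symm).2 with hax | hbx
            · rw [hcu x hax]
              exact Ne.symm hne
            · exact absurd ⟨(hN2 x).mpr (Or.inr ⟨Ne.symm hxu, ((hN1 x).mp h.symm).1, hbx⟩),
                (hN2 v).mpr (Or.inl rfl)⟩ hcond
          · rw [if_neg hyv]
            -- x, y ∉ {u, v}; goal c x ≠ c y
            obtain ⟨-, h⟩ := h
            by_cases hL : G1.Adj v x ∧ G1.Adj v y
            · rw [if_pos hL] at h
              rcases ((hN1 x).mp hL.1).2 with hax | hbx <;>
                rcases ((hN1 y).mp hL.2).2 with hay | hby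
              · -- both neighbours of u in G: ¬G1.Adj x y forces G.Adj x y
                have he : G.Adj x y := by
                  by_contra he
                  apply h
                  refine ⟨hxy, ?_⟩
                  rw [if_pos ⟨hax, hay⟩]
                  exact he
                exact c.valid he
              · rw [hcu x hax, hcv y hby]; exact Ne.symm hne
              · rw [hcv x hbx, hcu y hay]; exact hne
              · exact absurd ⟨(hN2 x).mpr (Or.inr ⟨Ne.symm hxu, Ne.symm hxv, hbx⟩),
                  (hN2 y).mpr (Or.inr ⟨Ne.symm hyu, Ne.symm hyv, hby⟩)⟩ hcond
            · rw [if_neg hL] at h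
              obtain ⟨-, h⟩ := h
              by_cases hc2 : G.Adj u x ∧ G.Adj u y
              · exact absurd ⟨(hN1 x).mpr ⟨fun hh => hxv hh.symm, Or.inl hc2.1⟩,
                  (hN1 y).mpr ⟨fun hh => hyv hh.symm, Or.inl hc2.2⟩⟩ hL
              · rw [if_neg hc2] at h
                exact c.valid h
end

section
/- M_v squared equals K_v up to a global phase: with M_v = X(π/2)_v · ∏_{u∈N(v)} Z(−π/2)_u and K_v = X_v · ∏_{u∈N(v)} Z_u, there is a unit scalar c with M_v² = c · K_v. Consequently, local complementation is involutive on graph states: M_v(M_v|G⟩) = |G⟩ up to phase. -/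
open scoped Classical Matrix ComplexConjugate

noncomputable section

/-- The Hadamard matrix. -/
def Hm : Matrix (Fin 2) (Fin 2) ℂ := (Real.sqrt 2 : ℂ)⁻¹ • !![1, 1; 1, -1]

/-- Z rotation `diag(1, e^{iα})`. -/
def Zrot (α : ℝ) : Matrix (Fin 2) (Fin 2) ℂ := !![1, 0; 0, Complex.exp (α * Complex.I)]

/-- X rotation `H ⬝ Z(α) ⬝ H`. -/
def Xrot (α : ℝ) : Matrix (Fin 2) (Fin 2) ℂ := Hm * Zrot α * Hm

/-- Pauli X. -/
def Xm : Matrix (Fin 2) (Fin 2) ℂ := !![0, 1; 1, 0]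

/-- Pauli Z. -/
def Zm : Matrix (Fin 2) (Fin 2) ℂ := !![1, 0; 0, -1]

/-- A single-qubit operator `A` applied on qubit `v` of an `n`-qubit system
(identity on every other tensor factor). -/
def act1 {n : ℕ} (A : Matrix (Fin 2) (Fin 2) ℂ) (v : Fin n) :
    Matrix (Fin n → Fin 2) (Fin n → Fin 2) ℂ :=
  fun x y => A (x v) (y v) * ∏ w : Fin n, if w = v then 1 else (if x w = y w then 1 else 0)

/-- Pauli `Z` applied on every qubit in `S` (a product of commuting diagonal gates). -/
def pauliZs {n : ℕ} (S : Finset (Fin n)) : Matrix (Fin n → Fin 2) (Fin n → Fin 2) ℂ :=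
  Matrix.diagonal fun x => ∏ u ∈ S, if x u = 1 then (-1 : ℂ) else 1

/-- `Z(α)` applied on every qubit in `S`. -/
def zrotS {n : ℕ} (α : ℝ) (S : Finset (Fin n)) : Matrix (Fin n → Fin 2) (Fin n → Fin 2) ℂ :=
  Matrix.diagonal fun x => ∏ u ∈ S, if x u = 1 then Complex.exp (α * Complex.I) else 1

/-- The controlled-Z gate on qubits `u`, `v`. -/
def CZ {n : ℕ} (u v : Fin n) : Matrix (Fin n → Fin 2) (Fin n → Fin 2) ℂ :=
  Matrix.diagonal fun x => if x u = 1 ∧ x v = 1 then (-1 : ℂ) else 1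

/-- The graph state `|G⟩ = (∏_{uv ∈ E} CZ_{uv}) |+⟩^{⊗ n}`, written out in amplitudes
(the CZ gates are diagonal, so the product over edges is the product of the signs). -/
def graphState {n : ℕ} (G : SimpleGraph (Fin n)) : (Fin n → Fin 2) → ℂ :=
  fun x => ((Real.sqrt 2 : ℂ))⁻¹ ^ n *
    ∏ a : Fin n, ∏ b : Fin n,
      if a < b ∧ G.Adj a b ∧ x a = 1 ∧ x b = 1 then (-1 : ℂ) else 1

lemma sqrt2C : ((Real.sqrt 2 : ℝ) : ℂ) * ((Real.sqrt 2 : ℝ) : ℂ) = 2 := by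
  rw [← Complex.ofReal_mul, Real.mul_self_sqrt (by norm_num)]
  norm_num

lemma Hm_sq : Hm * Hm = 1 := by
  have h := sqrt2C
  ext i j
  fin_cases i <;> fin_cases j <;>
    simp [Hm, Matrix.mul_apply, Fin.sum_univ_two, Matrix.one_apply] <;>
    field_simp <;> first | linear_combination (2:ℂ)*h | linear_combination (-2:ℂ)*h | linear_combination h | linear_combination (-1:ℂ)*h

lemma Zrot_half_sq : Zrot (Real.pi / 2) * Zrot (Real.pi / 2) = Zm := by
  have h : Complex.exp (↑Real.pi / 2 * Complex.I) * Complex.exp (↑Real.pi / 2 * Complex.I) = -1 := by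
    rw [← Complex.exp_add]
    have : (↑Real.pi : ℂ) / 2 * Complex.I + ↑Real.pi / 2 * Complex.I = ↑Real.pi * Complex.I := by
      ring
    rw [this, Complex.exp_pi_mul_I]
  ext i j
  fin_cases i <;> fin_cases j <;>
    simp [Zrot, Zm, Matrix.mul_apply, Fin.sum_univ_two, h]

lemma Xrot_half_sq : Xrot (Real.pi / 2) * Xrot (Real.pi / 2) = Xm := by
  have : Xrot (Real.pi / 2) * Xrot (Real.pi / 2) = Hm * (Zrot (Real.pi/2) * Zrot (Real.pi/2)) * Hm := by
    rw [Xrot]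
    rw [show Hm * Zrot (Real.pi/2) * Hm * (Hm * Zrot (Real.pi/2) * Hm)
        = Hm * Zrot (Real.pi/2) * (Hm * Hm) * Zrot (Real.pi/2) * Hm by
      simp [Matrix.mul_assoc]]
    rw [Hm_sq]
    simp [Matrix.mul_assoc]
  rw [this, Zrot_half_sq]
  have h := sqrt2C
  ext i j
  fin_cases i <;> fin_cases j <;>
    simp [Hm, Zm, Xm, Matrix.mul_apply, Fin.sum_univ_two] <;>
    field_simp <;> first | linear_combination (2:ℂ)*h | linear_combination (-2:ℂ)*h | linear_combination h | linear_combination (-1:ℂ)*h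

variable {n : ℕ}

lemma fin2cases (a : Fin 2) : a = 0 ∨ a = 1 := by fin_cases a <;> simp

/-- the flip sign lemma for a single factor -/
lemma factor_flip (G : SimpleGraph (Fin n)) (v : Fin n) (x : Fin n → Fin 2) (a b : Fin n) :
    (if a < b ∧ G.Adj a b ∧ Function.update x v (x v + 1) a = 1 ∧
        Function.update x v (x v + 1) b = 1 then (-1:ℂ) else 1)
    = ((if a = v ∧ v < b ∧ G.Adj v b ∧ x b = 1 then (-1:ℂ) else 1) *
       (if b = v ∧ a < v ∧ G.Adj a v ∧ x a = 1 then (-1:ℂ) else 1)) *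
      (if a < b ∧ G.Adj a b ∧ x a = 1 ∧ x b = 1 then (-1:ℂ) else 1) := by
  have f01 : (0:Fin 2) + 1 = 1 := rfl
  have f10 : (1:Fin 2) + 1 = 0 := rfl
  by_cases ha : a = v <;> by_cases hb : b = v
  · subst ha; subst hb; simp [lt_irrefl]
  · subst ha
    simp only [Function.update_self, Function.update_of_ne hb, hb, false_and, if_false,
      mul_one, true_and]
    by_cases h1 : a < b <;> by_cases h2 : G.Adj a b <;> by_cases h3 : x b = 1 <;>
      rcases fin2cases (x a) with h | h <;>
      simp_all [f01, f10] <;> norm_num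
  · subst hb
    simp only [Function.update_self, Function.update_of_ne ha, ha, false_and, if_false,
      one_mul, true_and]
    by_cases h1 : a < b <;> by_cases h2 : G.Adj a b <;> by_cases h3 : x a = 1 <;>
      rcases fin2cases (x b) with h | h <;>
      simp_all [f01, f10] <;> norm_num
  · simp [Function.update_of_ne ha, Function.update_of_ne hb, ha, hb]

lemma r1_prod (G : SimpleGraph (Fin n)) (v : Fin n) (x : Fin n → Fin 2) :
    (∏ a : Fin n, ∏ b : Fin n, if a = v ∧ v < b ∧ G.Adj v b ∧ x b = 1 then (-1:ℂ) else 1)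
      = ∏ b : Fin n, if v < b ∧ G.Adj v b ∧ x b = 1 then (-1:ℂ) else 1 := by
  rw [Finset.prod_eq_single v]
  · exact Finset.prod_congr rfl fun b _ => by simp
  · intro a _ hav
    exact Finset.prod_eq_one fun b _ => by simp [hav]
  · simp

lemma r2_prod (G : SimpleGraph (Fin n)) (v : Fin n) (x : Fin n → Fin 2) :
    (∏ a : Fin n, ∏ b : Fin n, if b = v ∧ a < v ∧ G.Adj a v ∧ x a = 1 then (-1:ℂ) else 1)
      = ∏ a : Fin n, if a < v ∧ G.Adj a v ∧ x a = 1 then (-1:ℂ) else 1 := by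
  refine Finset.prod_congr rfl fun a _ => ?_
  rw [Finset.prod_eq_single v]
  · simp
  · intro b _ hbv; simp [hbv]
  · simp

lemma sign_combine (G : SimpleGraph (Fin n)) (v : Fin n) (x : Fin n → Fin 2) :
    ((∏ b : Fin n, if v < b ∧ G.Adj v b ∧ x b = 1 then (-1:ℂ) else 1) *
     (∏ a : Fin n, if a < v ∧ G.Adj a v ∧ x a = 1 then (-1:ℂ) else 1))
      = ∏ u ∈ G.neighborFinset v, if x u = 1 then (-1:ℂ) else 1 := by
  rw [← Finset.prod_mul_distrib]
  have h : ∀ u : Fin n,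
      ((if v < u ∧ G.Adj v u ∧ x u = 1 then (-1:ℂ) else 1) *
       (if u < v ∧ G.Adj u v ∧ x u = 1 then (-1:ℂ) else 1))
      = if u ∈ G.neighborFinset v then (if x u = 1 then (-1:ℂ) else 1) else 1 := by
    intro u
    rcases lt_trichotomy v u with h | h | h
    · simp [h, not_lt_of_gt h, G.adj_comm, SimpleGraph.mem_neighborFinset]
      split_ifs <;> simp_all
    · subst h; simp
    · simp [h, not_lt_of_gt h, G.adj_comm, SimpleGraph.mem_neighborFinset]
      split_ifs <;> simp_all
  rw [Finset.prod_congr rfl fun u _ => h u, Finset.prod_ite_mem]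
  simp

/-- graph-state flip identity -/
lemma Q_flip (G : SimpleGraph (Fin n)) (v : Fin n) (x : Fin n → Fin 2) :
    (∏ a : Fin n, ∏ b : Fin n,
        if a < b ∧ G.Adj a b ∧ Function.update x v (x v + 1) a = 1 ∧
          Function.update x v (x v + 1) b = 1 then (-1:ℂ) else 1)
      = (∏ u ∈ G.neighborFinset v, if x u = 1 then (-1:ℂ) else 1) *
        ∏ a : Fin n, ∏ b : Fin n,
          if a < b ∧ G.Adj a b ∧ x a = 1 ∧ x b = 1 then (-1:ℂ) else 1 := by
  have h1 : (∏ a : Fin n, ∏ b : Fin n,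
      if a < b ∧ G.Adj a b ∧ Function.update x v (x v + 1) a = 1 ∧
        Function.update x v (x v + 1) b = 1 then (-1:ℂ) else 1)
      = ∏ a : Fin n, ∏ b : Fin n,
        ((if a = v ∧ v < b ∧ G.Adj v b ∧ x b = 1 then (-1:ℂ) else 1) *
         (if b = v ∧ a < v ∧ G.Adj a v ∧ x a = 1 then (-1:ℂ) else 1)) *
        (if a < b ∧ G.Adj a b ∧ x a = 1 ∧ x b = 1 then (-1:ℂ) else 1) :=
    Finset.prod_congr rfl fun a _ => Finset.prod_congr rfl fun b _ => factor_flip G v x a b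
  rw [h1]
  simp only [Finset.prod_mul_distrib]
  rw [r1_prod, r2_prod, sign_combine]

lemma p_sq (S : Finset (Fin n)) (x : Fin n → Fin 2) :
    (∏ u ∈ S, if x u = 1 then (-1:ℂ) else 1) * (∏ u ∈ S, if x u = 1 then (-1:ℂ) else 1) = 1 := by
  rw [← Finset.prod_mul_distrib]
  exact Finset.prod_eq_one fun u _ => by split_ifs <;> norm_num

lemma Xm_apply_eq (a : Fin 2) : Xm a (a + 1) = 1 := by
  fin_cases a <;> simp [Xm] <;> rfl

lemma Xm_apply_ne (a b : Fin 2) (h : b ≠ a + 1) : Xm a b = 0 := by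
  fin_cases a <;> fin_cases b <;> simp_all [Xm] <;> exact absurd rfl h

/-- the stabilizer identity -/
lemma stab (G : SimpleGraph (Fin n)) (v : Fin n) :
    (act1 Xm v * pauliZs (G.neighborFinset v)).mulVec (graphState G) = graphState G := by
  funext x
  set x' : Fin n → Fin 2 := Function.update x v (x v + 1) with hx'
  have key : ∀ y : Fin n → Fin 2,
      (act1 Xm v * pauliZs (G.neighborFinset v)) x y * graphState G y
        = if y = x' then
            (∏ u ∈ G.neighborFinset v, if x' u = 1 then (-1:ℂ) else 1) * graphState G x'
          else 0 := by
    intro y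
    rw [show (act1 Xm v * pauliZs (G.neighborFinset v)) x y
        = act1 Xm v x y * (∏ u ∈ G.neighborFinset v, if y u = 1 then (-1:ℂ) else 1) from
      Matrix.mul_diagonal ..]
    split_ifs with h
    · subst h
      have : act1 Xm v x x' = 1 := by
        rw [act1]
        have h1 : Xm (x v) (x' v) = 1 := by
          rw [hx', Function.update_self]; exact Xm_apply_eq _
        rw [h1, one_mul]
        exact Finset.prod_eq_one fun w _ => by
          by_cases hw : w = v
          · simp [hw]
          · simp [hw, hx', Function.update_of_ne hw]
      rw [this, one_mul]
    · rw [act1]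
      by_cases hv : y v = x v + 1
      · have : ∃ w, w ≠ v ∧ x w ≠ y w := by
          by_contra hc
          push_neg at hc
          exact h (funext fun w => by
            by_cases hw : w = v
            · subst hw; rw [hv, hx', Function.update_self]
            · rw [← hc w hw, hx', Function.update_of_ne hw])
        obtain ⟨w, hw, hxy⟩ := this
        rw [Finset.prod_eq_zero (Finset.mem_univ w) (by simp [hw, hxy])]
        ring
      · rw [Xm_apply_ne _ _ hv]
        ring
  have hmv : (act1 Xm v * pauliZs (G.neighborFinset v)).mulVec (graphState G) x
      = ∑ y : Fin n → Fin 2,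
          (act1 Xm v * pauliZs (G.neighborFinset v)) x y * graphState G y := by
    simp [Matrix.mulVec, dotProduct]
  rw [hmv, Finset.sum_congr rfl fun y _ => key y, Finset.sum_ite_eq' Finset.univ x' _]
  simp only [Finset.mem_univ, if_true]
  -- now : p x' * graphState G x' = graphState G x
  have hpx : (∏ u ∈ G.neighborFinset v, if x' u = 1 then (-1:ℂ) else 1)
      = ∏ u ∈ G.neighborFinset v, if x u = 1 then (-1:ℂ) else 1 := by
    refine Finset.prod_congr rfl fun u hu => ?_
    have : u ≠ v := fun huv => by
      subst huv; exact G.irrefl (SimpleGraph.mem_neighborFinset .. |>.mp hu)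
    rw [hx', Function.update_of_ne this]
  have hg : graphState G x' = (∏ u ∈ G.neighborFinset v, if x u = 1 then (-1:ℂ) else 1) *
      graphState G x := by
    rw [graphState, graphState, hx', Q_flip]
    ring
  rw [hpx, hg, ← mul_assoc, p_sq, one_mul]

lemma prod_P_eq (v : Fin n) (x z : Fin n → Fin 2) :
    (∏ w : Fin n, if w = v then (1:ℂ) else if x w = z w then 1 else 0)
      = if ∀ w, w ≠ v → x w = z w then 1 else 0 := by
  split_ifs with h
  · apply Finset.prod_eq_one
    intro w _
    by_cases hw : w = v
    · simp [hw]
    · simp [hw, h w hw]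
  · push_neg at h
    obtain ⟨w, hw, hxz⟩ := h
    apply Finset.prod_eq_zero (Finset.mem_univ w)
    simp [hw, hxz]

lemma sum_update (v : Fin n) (x : Fin n → Fin 2) (g : (Fin n → Fin 2) → ℂ) :
    (∑ z : Fin n → Fin 2, (if ∀ w, w ≠ v → x w = z w then (1:ℂ) else 0) * g z)
      = ∑ j : Fin 2, g (Function.update x v j) := by
  have h1 : ∀ z : Fin n → Fin 2,
      (if ∀ w, w ≠ v → x w = z w then (1:ℂ) else 0) * g z
        = if ∀ w, w ≠ v → x w = z w then g z else 0 := by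
    intro z; split_ifs <;> simp
  rw [Finset.sum_congr rfl (fun z _ => h1 z), ← Finset.sum_filter]
  have h2 : Finset.univ.filter (fun z : Fin n → Fin 2 => ∀ w, w ≠ v → x w = z w)
      = Finset.image (fun j => Function.update x v j) Finset.univ := by
    ext z
    simp only [Finset.mem_filter, Finset.mem_univ, true_and, Finset.mem_image]
    constructor
    · intro h
      exact ⟨z v, by
        funext w
        by_cases hw : w = v
        · subst hw; simp
        · simp [Function.update_of_ne hw, h w hw]⟩
    · rintro ⟨j, rfl⟩ w hw
      simp [Function.update_of_ne hw]
  rw [h2, Finset.sum_image (fun a _ b _ h => Function.update_injective x v h)]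

lemma act1_diag_sq (A : Matrix (Fin 2) (Fin 2) ℂ) (v : Fin n) (d : (Fin n → Fin 2) → ℂ)
    (hd : ∀ x j, d (Function.update x v j) = d x) :
    (act1 A v * Matrix.diagonal d) * (act1 A v * Matrix.diagonal d)
      = act1 (A * A) v * Matrix.diagonal (fun x => d x * d x) := by
  ext x y
  have hP : ∀ j : Fin 2,
      (∀ w, w ≠ v → Function.update x v j w = y w) ↔ (∀ w, w ≠ v → x w = y w) :=
    fun j => forall_congr' fun w => imp_congr_right fun hw => by
      rw [Function.update_of_ne hw]
  have hE : ∀ x y : Fin n → Fin 2, (act1 A v * Matrix.diagonal d) x y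
      = A (x v) (y v) * (if ∀ w, w ≠ v → x w = y w then (1:ℂ) else 0) * d y := by
    intro x y
    rw [Matrix.mul_diagonal]
    simp only [act1, prod_P_eq]
  rw [Matrix.mul_apply, Matrix.mul_diagonal]
  simp only [hE, act1, prod_P_eq, Matrix.mul_apply]
  have h1 : ∀ z : Fin n → Fin 2,
      A (x v) (z v) * (if ∀ w, w ≠ v → x w = z w then (1:ℂ) else 0) * d z *
        (A (z v) (y v) * (if ∀ w, w ≠ v → z w = y w then 1 else 0) * d y)
      = (if ∀ w, w ≠ v → x w = z w then (1:ℂ) else 0) *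
        (A (x v) (z v) * d z * (A (z v) (y v) *
          (if ∀ w, w ≠ v → z w = y w then 1 else 0) * d y)) := by
    intro z; ring
  rw [Finset.sum_congr rfl (fun z _ => h1 z), sum_update]
  simp only [Function.update_self, hd, hP]
  by_cases h : ∀ w, w ≠ v → x w = y w
  · have hxy : d x = d y := by
      have : x = Function.update y v (x v) := by
        funext w
        by_cases hw : w = v
        · subst hw; simp
        · simp [Function.update_of_ne hw, h w hw]
      rw [this, hd]
    simp only [if_pos h]
    rw [hxy, mul_one, Finset.sum_mul]
    exact Finset.sum_congr rfl fun j _ => by ring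
  · simp [h]

/-- `M_v² = c · K_v` for a unit scalar `c`; consequently local complementation is
involutive on graph states: `M_v (M_v |G⟩) = |G⟩` up to a global phase. -/
theorem Mv_sq_eq_Kv {n : ℕ} (G : SimpleGraph (Fin n)) (v : Fin n) :
    (∃ c : ℂ, ‖c‖ = 1 ∧
      (act1 (Xrot (Real.pi / 2)) v * zrotS (-(Real.pi / 2)) (G.neighborFinset v)) *
        (act1 (Xrot (Real.pi / 2)) v * zrotS (-(Real.pi / 2)) (G.neighborFinset v))
        = c • (act1 Xm v * pauliZs (G.neighborFinset v))) ∧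
    (∃ θ : ℝ,
      (act1 (Xrot (Real.pi / 2)) v * zrotS (-(Real.pi / 2)) (G.neighborFinset v)).mulVec
        ((act1 (Xrot (Real.pi / 2)) v * zrotS (-(Real.pi / 2)) (G.neighborFinset v)).mulVec
          (graphState G))
        = Complex.exp (θ * Complex.I) • graphState G) := by
  set S := G.neighborFinset v with hS
  set d : (Fin n → Fin 2) → ℂ :=
    fun x => ∏ u ∈ S, if x u = 1 then Complex.exp (↑(-(Real.pi / 2)) * Complex.I) else 1
    with hdS
  have hvS : v ∉ S := by
    rw [hS]
    exact fun h => G.irrefl ((SimpleGraph.mem_neighborFinset ..).mp h)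
  have hzd : zrotS (-(Real.pi / 2)) S = Matrix.diagonal d := rfl
  have hd : ∀ (x : Fin n → Fin 2) (j : Fin 2), d (Function.update x v j) = d x := by
    intro x j
    refine Finset.prod_congr rfl fun u hu => ?_
    have huv : u ≠ v := fun h => hvS (h ▸ hu)
    rw [Function.update_of_ne huv]
  have hdd : (fun x => d x * d x)
      = fun x => ∏ u ∈ S, if x u = 1 then (-1 : ℂ) else 1 := by
    funext x
    rw [hdS, ← Finset.prod_mul_distrib]
    refine Finset.prod_congr rfl fun u _ => ?_
    split_ifs with h
    · rw [← Complex.exp_add]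
      have harg : (↑(-(Real.pi / 2)) : ℂ) * Complex.I + ↑(-(Real.pi / 2)) * Complex.I
          = -(↑Real.pi * Complex.I) := by push_cast; ring
      rw [harg, Complex.exp_neg, Complex.exp_pi_mul_I]
      norm_num
    · rw [mul_one]
  have hMM : (act1 (Xrot (Real.pi / 2)) v * zrotS (-(Real.pi / 2)) S) *
      (act1 (Xrot (Real.pi / 2)) v * zrotS (-(Real.pi / 2)) S)
      = act1 Xm v * pauliZs S := by
    rw [hzd, act1_diag_sq (Xrot (Real.pi / 2)) v d hd, Xrot_half_sq, hdd, pauliZs]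
  refine ⟨⟨1, by norm_num, by rw [hMM, one_smul]⟩, 0, ?_⟩
  rw [Matrix.mulVec_mulVec, hMM, hS, stab G v]
  norm_num
end
end

section
/- Real quantum computing suffices: for any unitary U on (ℂ²)^{⊗n} there exists a real orthogonal matrix Ũ on (ℂ²)^{⊗(n+1)} ≅ ℝ-span encoding such that for all states |ψ⟩, the encoding |ψ⟩ ↦ Re(ψ)⊗|0⟩ + Im(ψ)⊗|1⟩ intertwines U and Ũ: Ũ(Re ψ ⊗ |0⟩ + Im ψ ⊗ |1⟩) = Re(Uψ) ⊗ |0⟩ + Im(Uψ) ⊗ |1⟩. -/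
open scoped Classical Matrix ComplexConjugate

noncomputable section

/-- The real encoding of a complex `n`-qubit state on `n+1` qubits:
`|ψ⟩ ↦ Re ψ ⊗ |0⟩ + Im ψ ⊗ |1⟩`. -/
def realEncode {n : ℕ} (ψ : (Fin n → Fin 2) → ℂ) : ((Fin n → Fin 2) × Fin 2) → ℂ :=
  fun p => if p.2 = 0 then ((ψ p.1).re : ℂ) else ((ψ p.1).im : ℂ)

/-- Real quantum computing suffices: every unitary `U` on `n` qubits is simulated, via the
real encoding, by a real orthogonal (real-entried unitary) operator on `n+1` qubits. -/
theorem real_simulation {n : ℕ} (U : Matrix (Fin n → Fin 2) (Fin n → Fin 2) ℂ)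
    (hU : U.conjTranspose * U = 1) :
    ∃ Ut : Matrix ((Fin n → Fin 2) × Fin 2) ((Fin n → Fin 2) × Fin 2) ℂ,
      (∀ p q, (Ut p q).im = 0) ∧
      Ut.conjTranspose * Ut = 1 ∧
      ∀ ψ : (Fin n → Fin 2) → ℂ, Ut.mulVec (realEncode ψ) = realEncode (U.mulVec ψ) := by
  classical
  have hS : ∀ q q' : Fin n → Fin 2,
      ∑ p, (starRingEnd ℂ) (U p q) * U p q' = if q = q' then 1 else 0 := by
    intro q q'
    have := congrFun (congrFun hU q) q'
    simpa [Matrix.mul_apply, Matrix.conjTranspose_apply, Matrix.one_apply] using this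
  have hRe : ∀ q q' : Fin n → Fin 2,
      ∑ p, ((U p q).re * (U p q').re + (U p q).im * (U p q').im)
        = if q = q' then 1 else 0 := by
    intro q q'
    have h := congrArg Complex.re (hS q q')
    simpa [Complex.re_sum, Complex.mul_re, apply_ite Complex.re] using h
  have hIm : ∀ q q' : Fin n → Fin 2,
      ∑ p, ((U p q).re * (U p q').im + -((U p q).im * (U p q').re)) = 0 := by
    intro q q'
    have h := congrArg Complex.im (hS q q')
    simpa [Complex.im_sum, Complex.mul_im, apply_ite Complex.im] using h
  refine ⟨fun p q =>
      if p.2 = 0 then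
        (if q.2 = 0 then ((U p.1 q.1).re : ℂ) else (-(U p.1 q.1).im : ℂ))
      else
        (if q.2 = 0 then ((U p.1 q.1).im : ℂ) else ((U p.1 q.1).re : ℂ)),
      ?_, ?_, ?_⟩
  · intro p q
    dsimp only
    split_ifs <;> simp
  · ext ⟨q, b⟩ ⟨q', b'⟩
    erw [Matrix.mul_apply]
    dsimp only [Matrix.conjTranspose, Matrix.transpose, Matrix.map, Matrix.of_apply]
    simp only [Matrix.mul_apply, Matrix.conjTranspose_apply, Fintype.sum_prod_type_right,
      Matrix.one_apply]
    fin_cases b <;> fin_cases b' <;>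
      simp only [Fin.sum_univ_two, Fin.isValue, Fin.mk_one, Fin.mk_zero, one_ne_zero, if_true,
        if_false, ite_true, ite_false, Complex.star_def, map_neg, Complex.conj_ofReal,
        Prod.mk.injEq, and_true, and_false, if_false, mul_neg, neg_mul, neg_neg,
        ← Complex.ofReal_mul, ← Complex.ofReal_neg, ← Complex.ofReal_sum,
        ← Complex.ofReal_add, ← Finset.sum_add_distrib]
    · rw [hRe q q']
      split_ifs <;> simp
    · simp only [show ((0 : Fin 2) = 1) ↔ False from by simp, and_false, if_false]
      rw [show (∑ x, (-((U x q).re * (U x q').im) + (U x q).im * (U x q').re))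
          = -∑ x, ((U x q).re * (U x q').im + -((U x q).im * (U x q').re)) from by
            rw [← Finset.sum_neg_distrib]
            exact Finset.sum_congr rfl fun _ _ => by ring,
        hIm q q']
      simp
    · rw [show (∑ x, (-((U x q).im * (U x q').re) + (U x q).re * (U x q').im))
          = ∑ x, ((U x q).re * (U x q').im + -((U x q).im * (U x q').re)) from
            Finset.sum_congr rfl fun _ _ => by ring,
        hIm q q']
      simp
    · rw [show (∑ x, ((U x q).im * (U x q').im + (U x q).re * (U x q').re))
          = ∑ x, ((U x q).re * (U x q').re + (U x q).im * (U x q').im) from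
            Finset.sum_congr rfl fun _ _ => by ring,
        hRe q q']
      split_ifs <;> simp
  · intro ψ
    funext pa
    obtain ⟨p, a⟩ := pa
    fin_cases a <;>
      simp only [Matrix.mulVec, dotProduct, realEncode, Fintype.sum_prod_type_right,
        Fin.sum_univ_two, Fin.isValue, Fin.mk_zero, Fin.mk_one, one_ne_zero, if_true, if_false,
        ite_true, ite_false, Complex.re_sum, Complex.im_sum, Complex.mul_re, Complex.mul_im,
        mul_neg, neg_mul, ← Complex.ofReal_mul, ← Complex.ofReal_neg, ← Complex.ofReal_sum,
        ← Complex.ofReal_add, ← Finset.sum_add_distrib, Complex.ofReal_inj]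
    · exact Finset.sum_congr rfl fun _ _ => by ring
    · exact Finset.sum_congr rfl fun _ _ => by ring
end
end
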